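/- The map ι is the transpose of the differential of the moment map with respect to the symplectic form: for every ADHM datum (B,i,j), every ξ = (ξ_k)_{k∈I} ∈ ⊕_{k∈I} End(V_k), and every m = (δB,δi,δj) ∈ M, one has ω(ι(ξ), m) = −Σ_{k∈I} tr(ξ_k ∘ (dμ(m))_k), where ι(ξ) = ((B_h∘ξ_{out(h)} − ξ_{in(h)}∘B_h)_h, (−ξ_k∘i_k)_k, (j_k∘ξ_k)_k) and dμ(δB,δi,δj) = (Σ_{h : in(h)=k} ε(h)(δB_h∘B_h̄ + B_h∘δB_h̄) + δi_k∘j_k + i_k∘δj_k)_k. -/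

import Mathlib

noncomputable section

/-- The data of a finite graph without edge loops, presented by its set `H` of oriented
edges over the vertex set `I`: source and target maps `src`, `tgt`, and a fixed-point-free
orientation-reversing involution `bar`. -/
structure GraphData (I H : Type) where
  src : H → I
  tgt : H → I
  bar : H → H
  bar_invol : ∀ h, bar (bar h) = h
  bar_ne_self : ∀ h, bar h ≠ h
  src_bar : ∀ h, src (bar h) = tgt h
  tgt_bar : ∀ h, tgt (bar h) = src h
  no_loops : ∀ h, src h ≠ tgt h

/-- Transport of the fibres of a family of normed spaces along an equality of indices. -/
def vCast {I : Type} (V : I → Type)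
    [∀ k, NormedAddCommGroup (V k)] [∀ k, NormedSpace ℂ (V k)]
    {k l : I} (e : k = l) : V k ≃L[ℂ] V l := by
  subst e
  exact ContinuousLinearEquiv.refl ℂ (V k)

/-- Stability of an ADHM datum `(B, i, j)`: the only family of subspaces `S k ⊆ V k`
which is `B`-invariant and contained in `ker (j k)` is the zero family. -/
def IsStable {I H : Type} (G : GraphData I H) (V W : I → Type)
    [∀ k, NormedAddCommGroup (V k)] [∀ k, NormedSpace ℂ (V k)]
    [∀ k, NormedAddCommGroup (W k)] [∀ k, NormedSpace ℂ (W k)]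
    (B : ∀ h : H, V (G.src h) →L[ℂ] V (G.tgt h))
    (j : ∀ k : I, V k →L[ℂ] W k) : Prop :=
  ∀ S : ∀ k : I, Submodule ℂ (V k),
    (∀ h : H, ∀ x ∈ S (G.src h), B h x ∈ S (G.tgt h)) →
    (∀ k : I, ∀ x ∈ S k, j k x = 0) →
    ∀ k : I, S k = ⊥

/-- For an oriented edge `h`, the composite `A ∘ A'` of a map `A` along `h` and a map `A'`
along `bar h`, as an endomorphism of `V (tgt h)`. -/
def barComp {I H : Type} (G : GraphData I H) (V : I → Type)
    [∀ k, NormedAddCommGroup (V k)] [∀ k, NormedSpace ℂ (V k)] (h : H)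
    (A : V (G.src h) →L[ℂ] V (G.tgt h))
    (A' : V (G.src (G.bar h)) →L[ℂ] V (G.tgt (G.bar h))) :
    V (G.tgt h) →L[ℂ] V (G.tgt h) :=
  A.comp ((vCast V (G.tgt_bar h) : V (G.tgt (G.bar h)) →L[ℂ] V (G.src h)).comp
    (A'.comp ((vCast V (G.src_bar h)).symm : V (G.tgt h) →L[ℂ] V (G.src (G.bar h)))))

/-- The `k`-th component of the moment map `μ(B, i, j) = ε B B + i j`. -/
def momentMap {I H : Type} [Fintype H] [DecidableEq I] (G : GraphData I H)
    (V W : I → Type)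
    [∀ k, NormedAddCommGroup (V k)] [∀ k, NormedSpace ℂ (V k)]
    [∀ k, NormedAddCommGroup (W k)] [∀ k, NormedSpace ℂ (W k)]
    (ε : H → ℂ)
    (B : ∀ h : H, V (G.src h) →L[ℂ] V (G.tgt h))
    (i : ∀ k : I, W k →L[ℂ] V k) (j : ∀ k : I, V k →L[ℂ] W k) (k : I) :
    V k →L[ℂ] V k :=
  (∑ h : H, if e : G.tgt h = k then
      ((vCast V e : V (G.tgt h) →L[ℂ] V k).comp
        ((ε h • barComp G V h (B h) (B (G.bar h))).comp
          ((vCast V e).symm : V k →L[ℂ] V (G.tgt h))))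
    else 0)
    + (i k).comp (j k)

/-- The differential of the moment map at `(B, i, j)`, evaluated on `(δB, δi, δj)`,
`k`-th component. -/
def dMomentMap {I H : Type} [Fintype H] [DecidableEq I] (G : GraphData I H)
    (V W : I → Type)
    [∀ k, NormedAddCommGroup (V k)] [∀ k, NormedSpace ℂ (V k)]
    [∀ k, NormedAddCommGroup (W k)] [∀ k, NormedSpace ℂ (W k)]
    (ε : H → ℂ)
    (B : ∀ h : H, V (G.src h) →L[ℂ] V (G.tgt h))
    (i : ∀ k : I, W k →L[ℂ] V k) (j : ∀ k : I, V k →L[ℂ] W k)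
    (δB : ∀ h : H, V (G.src h) →L[ℂ] V (G.tgt h))
    (δi : ∀ k : I, W k →L[ℂ] V k) (δj : ∀ k : I, V k →L[ℂ] W k) (k : I) :
    V k →L[ℂ] V k :=
  (∑ h : H, if e : G.tgt h = k then
      ((vCast V e : V (G.tgt h) →L[ℂ] V k).comp
        ((ε h • (barComp G V h (δB h) (B (G.bar h))
            + barComp G V h (B h) (δB (G.bar h)))).comp
          ((vCast V e).symm : V k →L[ℂ] V (G.tgt h))))
    else 0)
    + (δi k).comp (j k) + (i k).comp (δj k)

/-- The symplectic form `ω` on the space of ADHM data: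
`ω((B,i,j),(B',i',j')) = Σ_h ε(h) tr(B_h ∘ B'_{h̄}) + Σ_k (tr(i_k∘j'_k) − tr(i'_k∘j_k))`. -/
def symplForm {I H : Type} [Fintype I] [Fintype H] (G : GraphData I H)
    (V W : I → Type)
    [∀ k, NormedAddCommGroup (V k)] [∀ k, NormedSpace ℂ (V k)]
    [∀ k, NormedAddCommGroup (W k)] [∀ k, NormedSpace ℂ (W k)]
    (ε : H → ℂ)
    (B : ∀ h : H, V (G.src h) →L[ℂ] V (G.tgt h))
    (i : ∀ k : I, W k →L[ℂ] V k) (j : ∀ k : I, V k →L[ℂ] W k)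
    (B' : ∀ h : H, V (G.src h) →L[ℂ] V (G.tgt h))
    (i' : ∀ k : I, W k →L[ℂ] V k) (j' : ∀ k : I, V k →L[ℂ] W k) : ℂ :=
  (∑ h : H, ε h * LinearMap.trace ℂ (V (G.tgt h))
      (barComp G V h (B h) (B' (G.bar h))).toLinearMap)
  + ∑ k : I, (LinearMap.trace ℂ (V k) ((i k).comp (j' k)).toLinearMap
      - LinearMap.trace ℂ (V k) ((i' k).comp (j k)).toLinearMap)


namespace Aux4
variable {I : Type} {V : I → Type}
    [∀ k, NormedAddCommGroup (V k)] [∀ k, NormedSpace ℂ (V k)]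

@[simp] lemma vCast_rfl (k : I) : vCast V (rfl : k = k) = ContinuousLinearEquiv.refl ℂ (V k) := rfl

@[simp] lemma vCast_self_apply {k : I} (p : k = k) (x : V k) : vCast V p x = x := rfl

@[simp] lemma vCast_self_symm_apply {k : I} (p : k = k) (x : V k) : (vCast V p).symm x = x := rfl

lemma fam_cast {H : Type} (s t : H → I) (F : ∀ g : H, V (s g) →L[ℂ] V (t g)) {g g' : H}
    (e : g = g') :
    F g' = ((vCast V (congrArg t e) : V (t g) →L[ℂ] V (t g')).comp
      ((F g).comp ((vCast V (congrArg s e)).symm : V (s g') →L[ℂ] V (s g)))) := by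
  subst e; ext x; simp

lemma fam_cast' (ξ : ∀ k, V k →L[ℂ] V k) {k l : I} (e : k = l) :
    ξ k = (((vCast V e).symm : V l →L[ℂ] V k).comp ((ξ l).comp
      ((vCast V e) : V k →L[ℂ] V l))) := by
  subst e; ext x; simp

lemma trC {X Y : Type} [NormedAddCommGroup X] [NormedSpace ℂ X] [NormedAddCommGroup Y]
    [NormedSpace ℂ Y] [FiniteDimensional ℂ X] [FiniteDimensional ℂ Y]
    (f : X →L[ℂ] Y) (g : Y →L[ℂ] X) :
    LinearMap.trace ℂ Y (f.comp g).toLinearMap = LinearMap.trace ℂ X (g.comp f).toLinearMap := by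
  show LinearMap.trace ℂ Y ((f : X →ₗ[ℂ] Y).comp (g : Y →ₗ[ℂ] X)) = LinearMap.trace ℂ X ((g : Y →ₗ[ℂ] X).comp (f : X →ₗ[ℂ] Y))
  exact LinearMap.trace_comp_comm' (f := (g : Y →ₗ[ℂ] X)) (g := (f : X →ₗ[ℂ] Y))

lemma comp_sum {X Y : Type} [NormedAddCommGroup X] [NormedSpace ℂ X] [NormedAddCommGroup Y]
    [NormedSpace ℂ Y] {α : Type} [Fintype α] (g : Y →L[ℂ] X) (F : α → (X →L[ℂ] Y)) :
    g.comp (∑ a, F a) = ∑ a, g.comp (F a) := by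
  ext x; simp [ContinuousLinearMap.coe_sum', Finset.sum_apply, map_sum]

variable [∀ k, FiniteDimensional ℂ (V k)]

lemma key {a b a' b' a'' b'' : I} (e1 : a' = b) (e2 : b' = a)
    (e1' : a'' = b') (e2' : b'' = a')
    (g1 : a = a'') (g2 : b = b'')
    (A : V a' →L[ℂ] V b') (D : V a →L[ℂ] V b)
    (D'' : V a'' →L[ℂ] V b'') (ζ : V b →L[ℂ] V b) (ζ' : V a' →L[ℂ] V a')
    (hD : D'' = ((vCast V g2 : V b →L[ℂ] V b'')).comp
      (D.comp ((vCast V g1).symm : V a'' →L[ℂ] V a)))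
    (hζ : ζ' = (((vCast V e1).symm : V b →L[ℂ] V a')).comp
      (ζ.comp ((vCast V e1) : V a' →L[ℂ] V b))) :
    LinearMap.trace ℂ (V b')
      ((A.comp ζ').comp ((vCast V e2' : V b'' →L[ℂ] V a').comp
        (D''.comp ((vCast V e1').symm : V b' →L[ℂ] V a'')))).toLinearMap
    = LinearMap.trace ℂ (V b)
      ((ζ.comp ((D.comp ((vCast V e2 : V b' →L[ℂ] V a).comp
        (A.comp ((vCast V e1).symm : V b →L[ℂ] V a')))))).toLinearMap) := by
  subst e1 e2 e1' e2' hD hζ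
  rw [trC]
  conv_rhs => rw [trC]
  congr 1

end Aux4

/-- The map `ι` is the transpose of the differential of the moment map
with respect to the symplectic form: for every ADHM datum `(B,i,j)`, every
`ξ ∈ ⊕ₖ End(V_k)` and every tangent vector `m = (δB, δi, δj)`,
`ω(ι(ξ), m) = −Σₖ tr(ξ_k ∘ (dμ(m))_k)`. -/
theorem statement4
    {I H : Type} [Fintype I] [Fintype H] [DecidableEq I]
    (G : GraphData I H) (V W : I → Type)
    [∀ k, NormedAddCommGroup (V k)] [∀ k, NormedSpace ℂ (V k)]
    [∀ k, FiniteDimensional ℂ (V k)]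
    [∀ k, NormedAddCommGroup (W k)] [∀ k, NormedSpace ℂ (W k)]
    [∀ k, FiniteDimensional ℂ (W k)]
    (ε : H → ℂ) (hε0 : ∀ h, ε h ≠ 0) (hεbar : ∀ h, ε (G.bar h) = - ε h)
    (B : ∀ h : H, V (G.src h) →L[ℂ] V (G.tgt h))
    (i : ∀ k : I, W k →L[ℂ] V k) (j : ∀ k : I, V k →L[ℂ] W k)
    (ξ : ∀ k : I, V k →L[ℂ] V k)
    (δB : ∀ h : H, V (G.src h) →L[ℂ] V (G.tgt h))
    (δi : ∀ k : I, W k →L[ℂ] V k) (δj : ∀ k : I, V k →L[ℂ] W k) :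
    symplForm G V W ε
      (fun h => (B h).comp (ξ (G.src h)) - (ξ (G.tgt h)).comp (B h))
      (fun k => -((ξ k).comp (i k)))
      (fun k => (j k).comp (ξ k))
      δB δi δj
    = - ∑ k : I, LinearMap.trace ℂ (V k)
        ((ξ k).comp (dMomentMap G V W ε B i j δB δi δj k)).toLinearMap := by
  classical
  have hbar : Function.Involutive G.bar := G.bar_invol
  have hmom : ∀ k, LinearMap.trace ℂ (V k)
      ((ξ k).comp (dMomentMap G V W ε B i j δB δi δj k)).toLinearMap
      = (∑ h : H, if e : G.tgt h = k then
          ε h * (LinearMap.trace ℂ (V (G.tgt h))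
              ((ξ (G.tgt h)).comp (barComp G V h (δB h) (B (G.bar h)))).toLinearMap
            + LinearMap.trace ℂ (V (G.tgt h))
              ((ξ (G.tgt h)).comp (barComp G V h (B h) (δB (G.bar h)))).toLinearMap)
          else 0)
        + (LinearMap.trace ℂ (V k) ((ξ k).comp ((δi k).comp (j k))).toLinearMap
          + LinearMap.trace ℂ (V k) ((ξ k).comp ((i k).comp (δj k))).toLinearMap) := by
    intro k
    rw [dMomentMap, ContinuousLinearMap.comp_add, ContinuousLinearMap.comp_add,
      Aux4.comp_sum]
    simp only [ContinuousLinearMap.coe_add, ContinuousLinearMap.coe_sum, map_add, map_sum]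
    rw [add_assoc]
    congr 1
    apply Finset.sum_congr rfl
    intro h _
    by_cases e : G.tgt h = k
    · subst e
      rw [dif_pos rfl, dif_pos rfl]
      have hx : (ξ (G.tgt h)).comp
          (((vCast V (rfl : G.tgt h = G.tgt h) : V (G.tgt h) →L[ℂ] V (G.tgt h))).comp
            ((ε h • (barComp G V h (δB h) (B (G.bar h))
              + barComp G V h (B h) (δB (G.bar h)))).comp
              ((vCast V (rfl : G.tgt h = G.tgt h)).symm : V (G.tgt h) →L[ℂ] V (G.tgt h))))
          = ε h • ((ξ (G.tgt h)).comp (barComp G V h (δB h) (B (G.bar h)))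
              + (ξ (G.tgt h)).comp (barComp G V h (B h) (δB (G.bar h)))) := by
        ext x
        simp [ContinuousLinearMap.smul_apply, ContinuousLinearMap.add_apply, mul_add]
      rw [hx]
      simp only [ContinuousLinearMap.coe_smul, ContinuousLinearMap.coe_add, map_smul,
        map_add, smul_eq_mul, ContinuousLinearMap.coe_comp]
    · rw [dif_neg e, dif_neg e]
      simp
  have hR : (∑ k : I, LinearMap.trace ℂ (V k)
      ((ξ k).comp (dMomentMap G V W ε B i j δB δi δj k)).toLinearMap)
      = (∑ h : H, ε h * (LinearMap.trace ℂ (V (G.tgt h))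
              ((ξ (G.tgt h)).comp (barComp G V h (δB h) (B (G.bar h)))).toLinearMap
            + LinearMap.trace ℂ (V (G.tgt h))
              ((ξ (G.tgt h)).comp (barComp G V h (B h) (δB (G.bar h)))).toLinearMap))
        + ∑ k : I, (LinearMap.trace ℂ (V k) ((ξ k).comp ((δi k).comp (j k))).toLinearMap
            + LinearMap.trace ℂ (V k) ((ξ k).comp ((i k).comp (δj k))).toLinearMap) := by
    have e1 : (∑ k : I, LinearMap.trace ℂ (V k)
        ((ξ k).comp (dMomentMap G V W ε B i j δB δi δj k)).toLinearMap)
        = ∑ k : I, ((∑ h : H, if e : G.tgt h = k then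
            ε h * (LinearMap.trace ℂ (V (G.tgt h))
                ((ξ (G.tgt h)).comp (barComp G V h (δB h) (B (G.bar h)))).toLinearMap
              + LinearMap.trace ℂ (V (G.tgt h))
                ((ξ (G.tgt h)).comp (barComp G V h (B h) (δB (G.bar h)))).toLinearMap)
            else 0)
          + (LinearMap.trace ℂ (V k) ((ξ k).comp ((δi k).comp (j k))).toLinearMap
            + LinearMap.trace ℂ (V k) ((ξ k).comp ((i k).comp (δj k))).toLinearMap)) :=
      Finset.sum_congr rfl fun k _ => hmom k
    rw [e1, Finset.sum_add_distrib]
    congr 1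
    rw [Finset.sum_comm]
    refine Finset.sum_congr rfl fun h _ => ?_
    rw [Finset.sum_dite_eq]
    simp
  have hsub : ∀ h, (barComp G V h ((B h).comp (ξ (G.src h)) - (ξ (G.tgt h)).comp (B h))
        (δB (G.bar h)))
      = barComp G V h ((B h).comp (ξ (G.src h))) (δB (G.bar h))
        - (ξ (G.tgt h)).comp (barComp G V h (B h) (δB (G.bar h))) := by
    intro h
    simp only [barComp, ContinuousLinearMap.sub_comp, ContinuousLinearMap.comp_assoc]
  have hswap : ∀ h, ε (G.bar h) * LinearMap.trace ℂ (V (G.tgt (G.bar h)))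
        (barComp G V (G.bar h) ((B (G.bar h)).comp (ξ (G.src (G.bar h))))
          (δB (G.bar (G.bar h)))).toLinearMap
      = -(ε h * LinearMap.trace ℂ (V (G.tgt h))
          ((ξ (G.tgt h)).comp (barComp G V h (δB h) (B (G.bar h)))).toLinearMap) := by
    intro h
    rw [hεbar, neg_mul, neg_inj]
    have hk := Aux4.key (V := V) (G.src_bar h) (G.tgt_bar h) (G.src_bar (G.bar h))
      (G.tgt_bar (G.bar h)) (congrArg G.src (G.bar_invol h).symm)
      (congrArg G.tgt (G.bar_invol h).symm)
      (B (G.bar h)) (δB h) (δB (G.bar (G.bar h))) (ξ (G.tgt h)) (ξ (G.src (G.bar h)))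
      (Aux4.fam_cast G.src G.tgt δB (G.bar_invol h).symm)
      (Aux4.fam_cast' ξ (G.src_bar h))
    simp only [barComp]
    rw [hk]
  have hedgeswap : (∑ h : H, ε h * LinearMap.trace ℂ (V (G.tgt h))
        (barComp G V h ((B h).comp (ξ (G.src h))) (δB (G.bar h))).toLinearMap)
      = -∑ h : H, ε h * LinearMap.trace ℂ (V (G.tgt h))
          ((ξ (G.tgt h)).comp (barComp G V h (δB h) (B (G.bar h)))).toLinearMap := by
    have hre : (∑ h : H, ε h * LinearMap.trace ℂ (V (G.tgt h))
          (barComp G V h ((B h).comp (ξ (G.src h))) (δB (G.bar h))).toLinearMap)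
        = ∑ h : H, ε (G.bar h) * LinearMap.trace ℂ (V (G.tgt (G.bar h)))
            (barComp G V (G.bar h) ((B (G.bar h)).comp (ξ (G.src (G.bar h))))
              (δB (G.bar (G.bar h)))).toLinearMap := by
      have hc := Equiv.sum_comp (Function.Involutive.toPerm G.bar hbar)
        (fun h => ε h * LinearMap.trace ℂ (V (G.tgt h))
          (barComp G V h ((B h).comp (ξ (G.src h))) (δB (G.bar h))).toLinearMap)
      simp only [Function.Involutive.coe_toPerm] at hc
      exact hc.symm
    rw [hre, Finset.sum_congr rfl fun h _ => hswap h, Finset.sum_neg_distrib]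
  have hij : ∀ k, LinearMap.trace ℂ (V k)
        ((-((ξ k).comp (i k))).comp (δj k)).toLinearMap
      - LinearMap.trace ℂ (V k) ((δi k).comp ((j k).comp (ξ k))).toLinearMap
      = -(LinearMap.trace ℂ (V k) ((ξ k).comp ((δi k).comp (j k))).toLinearMap
        + LinearMap.trace ℂ (V k) ((ξ k).comp ((i k).comp (δj k))).toLinearMap) := by
    intro k
    have h1 : (-((ξ k).comp (i k))).comp (δj k)
        = -((ξ k).comp ((i k).comp (δj k))) := by
      rw [ContinuousLinearMap.neg_comp, ContinuousLinearMap.comp_assoc]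
    have h2 : LinearMap.trace ℂ (V k) ((δi k).comp ((j k).comp (ξ k))).toLinearMap
        = LinearMap.trace ℂ (V k) ((ξ k).comp ((δi k).comp (j k))).toLinearMap := by
      rw [Aux4.trC (δi k) ((j k).comp (ξ k)), ContinuousLinearMap.comp_assoc,
        Aux4.trC (j k) ((ξ k).comp (δi k)), ContinuousLinearMap.comp_assoc]
    rw [h1, h2]
    simp only [ContinuousLinearMap.coe_neg, map_neg]
    ring
  rw [symplForm, hR]
  have hL1 : (∑ h : H, ε h * LinearMap.trace ℂ (V (G.tgt h))
        (barComp G V h ((B h).comp (ξ (G.src h)) - (ξ (G.tgt h)).comp (B h))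
          (δB (G.bar h))).toLinearMap)
      = (∑ h : H, ε h * LinearMap.trace ℂ (V (G.tgt h))
          (barComp G V h ((B h).comp (ξ (G.src h))) (δB (G.bar h))).toLinearMap)
        - ∑ h : H, ε h * LinearMap.trace ℂ (V (G.tgt h))
            ((ξ (G.tgt h)).comp (barComp G V h (B h) (δB (G.bar h)))).toLinearMap := by
    rw [← Finset.sum_sub_distrib]
    refine Finset.sum_congr rfl fun h _ => ?_
    rw [hsub h]
    simp only [ContinuousLinearMap.coe_sub, map_sub]
    ring
  rw [hL1, hedgeswap]
  have hL2 : (∑ k : I, (LinearMap.trace ℂ (V k)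
        ((-((ξ k).comp (i k))).comp (δj k)).toLinearMap
      - LinearMap.trace ℂ (V k) ((δi k).comp ((j k).comp (ξ k))).toLinearMap))
      = -∑ k : I, (LinearMap.trace ℂ (V k) ((ξ k).comp ((δi k).comp (j k))).toLinearMap
        + LinearMap.trace ℂ (V k) ((ξ k).comp ((i k).comp (δj k))).toLinearMap) := by
    rw [← Finset.sum_neg_distrib]
    exact Finset.sum_congr rfl fun k _ => hij k
  rw [hL2]
  have hsplit : (∑ h : H, ε h * (LinearMap.trace ℂ (V (G.tgt h))
          ((ξ (G.tgt h)).comp (barComp G V h (δB h) (B (G.bar h)))).toLinearMap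
        + LinearMap.trace ℂ (V (G.tgt h))
          ((ξ (G.tgt h)).comp (barComp G V h (B h) (δB (G.bar h)))).toLinearMap))
      = (∑ h : H, ε h * LinearMap.trace ℂ (V (G.tgt h))
          ((ξ (G.tgt h)).comp (barComp G V h (δB h) (B (G.bar h)))).toLinearMap)
        + ∑ h : H, ε h * LinearMap.trace ℂ (V (G.tgt h))
            ((ξ (G.tgt h)).comp (barComp G V h (B h) (δB (G.bar h)))).toLinearMap := by
    rw [← Finset.sum_add_distrib]
    refine Finset.sum_congr rfl fun h _ => ?_
    ring
  rw [hsplit]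
  ring
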